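/- For any fixed C ≥ 0 (possibly +∞) and any integer T ≥ 1, the map z ↦ Ψ_+^{-1}(z,C) is non-decreasing with respect to the partial order ⪰ on [0,1]^T; that is, if z ⪰ z' then Ψ_+^{-1}(z,C) ≥ Ψ_+^{-1}(z',C). -/

import Mathlib

/-!
At the mean, `Ψ(z, μ_z) = 0`: since `log (1 + x) ≤ x`, a finite bet `α` earns at most
`α ∑ (z_t - μ_z) = 0`, and an infinite bet is admissible only when `μ_z ∈ {0, 1}`, where `z` is
constant. Hence `μ_z ≤ Ψ_+^{-1}(z, C)`. Above the mean, a bet `α ≥ 0` earns at most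
`α ∑ (z_t - μ) ≤ 0 ≤ Ψ(z', μ)`, while a bet `α ≤ 0` earns less on `z` than on `z' ⪯ z`; so
`Ψ(z, μ) ≤ Ψ(z', μ)` for `μ > μ_z`. Every `μ` admissible for `z'` is thus either at most `μ_z`
or admissible for `z`.
-/

open MeasureTheory Set

/-- Extended-real logarithm: `log ⊤ = ⊤`, `log x = -∞` for `x ≤ 0` (in particular `log 0 = -∞`). -/
noncomputable def elog (x : EReal) : EReal :=
  if x = ⊤ then ⊤ else if x ≤ 0 then ⊥ else ((Real.log x.toReal : ℝ) : EReal)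

/-- Lower endpoint `-1/(1-μ)` of the betting interval, with the convention `1/0 = +∞`. -/
noncomputable def betLower (μ : ℝ) : EReal := if μ = 1 then ⊥ else ((-(1 - μ)⁻¹ : ℝ) : EReal)

/-- Upper endpoint `1/μ` of the betting interval, with the convention `1/0 = +∞`. -/
noncomputable def betUpper (μ : ℝ) : EReal := if μ = 0 then ⊤ else ((μ⁻¹ : ℝ) : EReal)

/-- The betting interval `A_μ = [-1/(1-μ), 1/μ]` (as a set of extended reals). -/
noncomputable def betSet (μ : ℝ) : Set EReal := Set.Icc (betLower μ) (betUpper μ)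

/-- `(1/T) ∑_t log(1 + α (z_t - μ))`, with EReal conventions (`0 * ±∞ = 0`, `log 0 = -∞`). -/
noncomputable def betTerm {T : ℕ} (z : Fin T → ℝ) (μ : ℝ) (α : EReal) : EReal :=
  (((T : ℝ)⁻¹ : ℝ) : EReal) * ∑ t : Fin T, elog (1 + α * ((z t - μ : ℝ) : EReal))

/-- `Ψ(z, μ) = sup_{α ∈ A_μ} (1/T) ∑_t log(1 + α (z_t - μ))`. -/
noncomputable def Psi {T : ℕ} (z : Fin T → ℝ) (μ : ℝ) : EReal :=
  ⨆ α ∈ betSet μ, betTerm z μ α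

/-- `μ_z = (1/T) ∑_t z_t`. -/
noncomputable def muz {T : ℕ} (z : Fin T → ℝ) : ℝ := (T : ℝ)⁻¹ * ∑ t, z t

/-- The upper inverse `Ψ_+^{-1}(z, C) = sup {μ ∈ [0,1] : Ψ(z,μ) ≤ C}`. -/
noncomputable def PsiInvPlus {T : ℕ} (z : Fin T → ℝ) (C : EReal) : ℝ :=
  sSup {μ : ℝ | μ ∈ Set.Icc (0 : ℝ) 1 ∧ Psi z μ ≤ C}

/-- The lower inverse `Ψ_-^{-1}(z, C) = inf {μ ∈ [0,1] : Ψ(z,μ) ≤ C}`. -/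
noncomputable def PsiInvMinus {T : ℕ} (z : Fin T → ℝ) (C : EReal) : ℝ :=
  sInf {μ : ℝ | μ ∈ Set.Icc (0 : ℝ) 1 ∧ Psi z μ ≤ C}

lemma EReal.coe_finset_sum {ι : Type*} (s : Finset ι) (f : ι → ℝ) :
    ((∑ i ∈ s, f i : ℝ) : EReal) = ∑ i ∈ s, (f i : EReal) :=
  map_sum (⟨⟨Real.toEReal, EReal.coe_zero⟩, EReal.coe_add⟩ : ℝ →+ EReal) f s

lemma elog_mono : Monotone elog := by
  intro x y hxy
  unfold elog
  by_cases hy : y = ⊤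
  · simp [hy]
  have hx : x ≠ ⊤ := fun h => hy (top_le_iff.mp (h ▸ hxy))
  rw [if_neg hx, if_neg hy]
  by_cases hx0 : x ≤ 0
  · simp [hx0]
  have hy0 : ¬ y ≤ 0 := fun h => hx0 (hxy.trans h)
  rw [if_neg hx0, if_neg hy0]
  have hxb : x ≠ ⊥ := ne_bot_of_gt (not_le.mp hx0)
  have hxpos : 0 < x.toReal := EReal.toReal_pos (not_le.mp hx0) hx
  exact EReal.coe_le_coe_iff.mpr (Real.log_le_log hxpos (EReal.toReal_le_toReal hxy hxb hy))

lemma elog_one : elog 1 = 0 := by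
  rw [← EReal.coe_one, elog, if_neg (EReal.coe_ne_top 1), if_neg (by norm_num), EReal.toReal_coe,
    Real.log_one, EReal.coe_zero]

lemma elog_one_add_coe_le (x : ℝ) : elog (1 + x) ≤ x := by
  rw [← EReal.coe_one, ← EReal.coe_add, elog, if_neg (EReal.coe_ne_top _)]
  split_ifs with h
  · exact bot_le
  · rw [EReal.toReal_coe, EReal.coe_le_coe_iff]
    linarith [Real.log_le_sub_one_of_pos (EReal.coe_pos.mp (not_le.mp h))]

lemma muz_mem_Icc {T : ℕ} {z : Fin T → ℝ} (hz : ∀ t, z t ∈ Icc (0 : ℝ) 1) :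
    muz z ∈ Icc (0 : ℝ) 1 := by
  have hsum : ∑ t, z t ≤ T :=
    calc ∑ t, z t ≤ ∑ _t : Fin T, (1 : ℝ) := Finset.sum_le_sum fun t _ => (hz t).2
      _ = T := by simp
  refine ⟨mul_nonneg (by positivity) (Finset.sum_nonneg fun t _ => (hz t).1), ?_⟩
  calc muz z ≤ (T : ℝ)⁻¹ * T := by rw [muz]; gcongr
    _ ≤ 1 := by
      rcases Nat.eq_zero_or_pos T with rfl | hT
      · simp
      · rw [inv_mul_cancel₀ (by positivity)]

lemma sum_eq_mul_muz {T : ℕ} (z : Fin T → ℝ) : ∑ t, z t = T * muz z := by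
  rcases Nat.eq_zero_or_pos T with rfl | hT
  · simp
  · rw [muz, mul_inv_cancel_left₀ (by positivity)]

lemma sum_sub_eq_mul {T : ℕ} (z : Fin T → ℝ) (μ : ℝ) :
    ∑ t, (z t - μ) = T * (muz z - μ) := by
  rw [Finset.sum_sub_distrib, sum_eq_mul_muz]
  simp [mul_sub]

lemma betTerm_coe_le {T : ℕ} (z : Fin T → ℝ) (μ r : ℝ) :
    betTerm z μ r ≤ (((T : ℝ)⁻¹ * (r * ∑ t, (z t - μ)) : ℝ) : EReal) := by
  rw [betTerm, EReal.coe_mul, Finset.mul_sum, EReal.coe_finset_sum]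
  gcongr with t
  rw [← EReal.coe_mul]
  exact elog_one_add_coe_le _

lemma betTerm_eq_zero_of_forall_eq {T : ℕ} {z : Fin T → ℝ} {μ : ℝ} (h : ∀ t, z t = μ)
    (α : EReal) : betTerm z μ α = 0 := by
  simp [betTerm, h, elog_one]

lemma betTerm_antitone {T : ℕ} {z z' : Fin T → ℝ} (hord : ∀ t, z' t ≤ z t) (μ : ℝ)
    {α : EReal} (hα : α ≤ 0) : betTerm z μ α ≤ betTerm z' μ α := by
  rw [betTerm, betTerm]
  gcongr with t
  refine elog_mono (add_le_add_right ?_ 1)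
  rw [mul_comm α, mul_comm α]
  exact EReal.mul_le_mul_of_nonpos_right (EReal.coe_le_coe_iff.mpr (by linarith [hord t])) hα

lemma eq_zero_of_top_mem_betSet {μ : ℝ} (h : ⊤ ∈ betSet μ) : μ = 0 := by
  by_contra hμ
  simp [betSet, betUpper, hμ] at h

lemma eq_one_of_bot_mem_betSet {μ : ℝ} (h : ⊥ ∈ betSet μ) : μ = 1 := by
  by_contra hμ
  simp [betSet, betLower, hμ] at h

lemma zero_mem_betSet {μ : ℝ} (hμ : μ ∈ Icc (0 : ℝ) 1) : 0 ∈ betSet μ := by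
  constructor
  · unfold betLower
    split_ifs
    · exact bot_le
    · exact EReal.coe_nonpos.mpr (neg_nonpos.mpr (inv_nonneg.mpr (sub_nonneg.mpr hμ.2)))
  · unfold betUpper
    split_ifs
    · exact le_top
    · exact EReal.coe_nonneg.mpr (inv_nonneg.mpr hμ.1)

lemma Psi_nonneg {T : ℕ} (z : Fin T → ℝ) {μ : ℝ} (hμ : μ ∈ Icc (0 : ℝ) 1) : 0 ≤ Psi z μ := by
  have h : betTerm z μ 0 = 0 := by simp [betTerm, elog_one]
  exact h ▸ le_iSup₂ (f := fun α _ => betTerm z μ α) 0 (zero_mem_betSet hμ)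

lemma Psi_muz_nonpos {T : ℕ} {z : Fin T → ℝ} (hz : ∀ t, z t ∈ Icc (0 : ℝ) 1) :
    Psi z (muz z) ≤ 0 := by
  have hsum : ∑ t, (z t - muz z) = 0 := by rw [sum_sub_eq_mul, sub_self, mul_zero]
  refine iSup₂_le fun α hα => ?_
  induction α with
  | bot =>
    have h1 := eq_one_of_bot_mem_betSet hα
    have hconst : ∀ t, z t = muz z := fun t => sub_eq_zero.mp <|
      (Finset.sum_eq_zero_iff_of_nonpos fun t _ => by linarith [(hz t).2]).mp hsum t
        (Finset.mem_univ t)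
    exact (betTerm_eq_zero_of_forall_eq hconst ⊥).le
  | top =>
    have h0 := eq_zero_of_top_mem_betSet hα
    have hconst : ∀ t, z t = muz z := fun t => sub_eq_zero.mp <|
      (Finset.sum_eq_zero_iff_of_nonneg fun t _ => by linarith [(hz t).1]).mp hsum t
        (Finset.mem_univ t)
    exact (betTerm_eq_zero_of_forall_eq hconst ⊤).le
  | coe r => exact (betTerm_coe_le z _ r).trans (by simp [hsum])

lemma Psi_le_of_muz_lt {T : ℕ} {z z' : Fin T → ℝ} (hz : ∀ t, z t ∈ Icc (0 : ℝ) 1)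
    (hord : ∀ t, z' t ≤ z t) {μ : ℝ} (hμ : muz z < μ) (hμ1 : μ ≤ 1) : Psi z μ ≤ Psi z' μ := by
  have hμ0 : 0 < μ := (muz_mem_Icc hz).1.trans_lt hμ
  refine iSup₂_le fun α hα => ?_
  rcases le_total α 0 with hα0 | hα0
  · exact (betTerm_antitone hord μ hα0).trans (le_iSup₂ (f := fun α _ => betTerm z' μ α) α hα)
  refine le_trans ?_ (Psi_nonneg z' ⟨hμ0.le, hμ1⟩)
  induction α with
  | bot => exact absurd hα0 (by simp)
  | top => exact absurd (eq_zero_of_top_mem_betSet hα) hμ0.ne'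
  | coe r =>
    refine (betTerm_coe_le z μ r).trans (EReal.coe_nonpos.mpr ?_)
    rw [sum_sub_eq_mul]
    have hr : 0 ≤ r := EReal.coe_nonneg.mp hα0
    have hmean : (T : ℝ) * (muz z - μ) ≤ 0 :=
      mul_nonpos_of_nonneg_of_nonpos (Nat.cast_nonneg T) (by linarith)
    exact mul_nonpos_of_nonneg_of_nonpos (by positivity) (mul_nonpos_of_nonneg_of_nonpos hr hmean)

theorem psiInvPlus_mono_general {T : ℕ} (C : EReal) (hC : 0 ≤ C)
    (z z' : Fin T → ℝ)
    (hz : ∀ t, z t ∈ Set.Icc (0 : ℝ) 1)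
    (hord : ∀ t, z' t ≤ z t) :
    PsiInvPlus z' C ≤ PsiInvPlus z C := by
  have hbdd : BddAbove {μ : ℝ | μ ∈ Icc (0 : ℝ) 1 ∧ Psi z μ ≤ C} := ⟨1, fun μ hμ => hμ.1.2⟩
  have hmuz : muz z ≤ PsiInvPlus z C :=
    le_csSup hbdd ⟨muz_mem_Icc hz, (Psi_muz_nonpos hz).trans hC⟩
  refine Real.sSup_le (fun μ ⟨hμ, hψ⟩ => ?_) ((muz_mem_Icc hz).1.trans hmuz)
  rcases le_or_gt μ (muz z) with h | h
  · exact h.trans hmuz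
  · exact le_csSup hbdd ⟨hμ, (Psi_le_of_muz_lt hz hord h hμ.2).trans hψ⟩

/-- For fixed `C ≥ 0` (possibly `+∞`), `z ↦ Ψ_+^{-1}(z, C)` is non-decreasing w.r.t. the
coordinatewise order `⪰` on `[0,1]^T`. -/
theorem psiInvPlus_mono {T : ℕ} (hT : 1 ≤ T) (C : EReal) (hC : 0 ≤ C)
    (z z' : Fin T → ℝ)
    (hz : ∀ t, z t ∈ Set.Icc (0 : ℝ) 1) (hz' : ∀ t, z' t ∈ Set.Icc (0 : ℝ) 1)
    (hord : ∀ t, z' t ≤ z t) :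
    PsiInvPlus z' C ≤ PsiInvPlus z C :=
  psiInvPlus_mono_general C hC z z' hz hord
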